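/- arXiv:1309.5469 — 3 statements merged into one kernel-verified Lean document; each statement's English description precedes it below -/
import Mathlib

section
/- Let k ≥ 2 and n ≥ 1, and let f : 𝔗^n → ℝ be k-submodular with f(𝟎) = 0. Then U(f) is non-empty. -/
/-- The star tree `𝔗` with `k` leaves: `none` is the root `o`, `some ℓ` the leaves. -/
abbrev KTree (k : ℕ) := Option (Fin k)

/-- The intersection `⊓` on `𝔗`. -/
def tmeet {k : ℕ} (a b : KTree k) : KTree k := if a = b then a else none

/-- The union `⊔` on `𝔗`. -/
def tjoin {k : ℕ} : KTree k → KTree k → KTree k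
  | none, b => b
  | a, none => a
  | some p, some q => if p = q then some p else none

/-- Componentwise intersection on `𝔗^n`. -/
def vmeet {k n : ℕ} (T U : Fin n → KTree k) : Fin n → KTree k := fun i => tmeet (T i) (U i)

/-- Componentwise union on `𝔗^n`. -/
def vjoin {k n : ℕ} (T U : Fin n → KTree k) : Fin n → KTree k := fun i => tjoin (T i) (U i)

/-- `f : 𝔗^n → ℝ` is `k`-submodular. -/
def KSubmodular {k n : ℕ} (f : (Fin n → KTree k) → ℝ) : Prop :=
  ∀ T U, f (vmeet T U) + f (vjoin T U) ≤ f T + f U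

/-- The function `\overline{(x,L)} : 𝔗^n → ℝ`. -/
def obar {k n : ℕ} (x : Fin n → ℝ) (L : Fin n → Fin k) (T : Fin n → KTree k) : ℝ :=
  ∑ i, Option.elim (T i) 0 (fun ℓ => if ℓ = L i then x i else -x i)

/-- Membership `(x,L) ∈ U(f)`. -/
def memU {k n : ℕ} (f : (Fin n → KTree k) → ℝ) (x : Fin n → ℝ) (L : Fin n → Fin k) : Prop :=
  (∀ i, 0 ≤ x i) ∧ ∀ T, obar x L T ≤ f T

/-- The `L¹`-norm `‖x‖`. -/
def nrm {n : ℕ} (x : Fin n → ℝ) : ℝ := ∑ i, x i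


lemma obar_supermod {k n : ℕ} (x : Fin n → ℝ) (hx : ∀ i, 0 ≤ x i) (L : Fin n → Fin k)
    (T U : Fin n → KTree k) :
    obar x L T + obar x L U ≤ obar x L (vmeet T U) + obar x L (vjoin T U) := by
  unfold obar vmeet vjoin
  rw [← Finset.sum_add_distrib, ← Finset.sum_add_distrib]
  apply Finset.sum_le_sum
  intro i _
  have hxi := hx i
  rcases T i with _ | p <;> rcases U i with _ | q
  · simp [tmeet, tjoin]
  · simp [tmeet, tjoin]
  · simp [tmeet, tjoin]
  · by_cases hpq : p = q
    · subst hpq; simp [tmeet, tjoin]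
    · simp only [tmeet, tjoin, if_neg hpq, Option.some.injEq, Option.elim]
      split_ifs with h1 h2 <;> simp_all <;> linarith

lemma vmeet_snoc {k n : ℕ} (T U : Fin n → KTree k) (a b : KTree k) :
    vmeet (Fin.snoc T a) (Fin.snoc U b) = Fin.snoc (vmeet T U) (tmeet a b) := by
  funext i
  refine Fin.lastCases ?_ ?_ i <;> simp [vmeet]

lemma vjoin_snoc {k n : ℕ} (T U : Fin n → KTree k) (a b : KTree k) :
    vjoin (Fin.snoc T a) (Fin.snoc U b) = Fin.snoc (vjoin T U) (tjoin a b) := by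
  funext i
  refine Fin.lastCases ?_ ?_ i <;> simp [vjoin]

lemma snoc_none {k n : ℕ} :
    (Fin.snoc (fun _ => none) none : Fin (n+1) → KTree k) = fun _ => none := by
  funext i
  refine Fin.lastCases ?_ ?_ i <;> simp

lemma obar_snoc {k n : ℕ} (x : Fin n → ℝ) (x' : ℝ) (L : Fin n → Fin k) (L' : Fin k)
    (T : Fin n → KTree k) (t : KTree k) :
    obar (Fin.snoc x x') (Fin.snoc L L') (Fin.snoc T t)
      = obar x L T + Option.elim t 0 (fun ℓ => if ℓ = L' then x' else -x') := by
  unfold obar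
  rw [Fin.sum_univ_castSucc]
  simp

lemma key (k : ℕ) (hk : 2 ≤ k) :
    ∀ n (f : (Fin n → KTree k) → ℝ), KSubmodular f → f (fun _ => none) = 0 →
      ∃ x L, memU f x L := by
  intro n
  induction n with
  | zero =>
    intro f _ h0
    refine ⟨fun _ => 0, fun i => i.elim0, fun i => i.elim0, ?_⟩
    intro T
    have hT : T = fun _ => none := funext fun i => i.elim0
    simp [obar, hT, h0]
  | succ n ih =>
    intro f hf h0
    set f' : (Fin n → KTree k) → ℝ := fun T => f (Fin.snoc T none) with hf'
    have hf'sub : KSubmodular f' := by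
      intro T U
      have := hf (Fin.snoc T none) (Fin.snoc U none)
      rw [vmeet_snoc, vjoin_snoc] at this
      simpa [f', tmeet, tjoin] using this
    have hf'0 : f' (fun _ => none) = 0 := by
      simp only [f', snoc_none, h0]
    obtain ⟨x, L, hx, hb⟩ := ih f' hf'sub hf'0
    have hchoose : ∀ ℓ : Fin k, ∃ T0 : Fin n → KTree k, ∀ T,
        f (Fin.snoc T0 (some ℓ)) - obar x L T0 ≤ f (Fin.snoc T (some ℓ)) - obar x L T := by
      intro ℓ
      obtain ⟨T0, _, hT0⟩ := Finset.exists_min_image Finset.univ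
        (fun T => f (Fin.snoc T (some ℓ)) - obar x L T) ⟨fun _ => none, Finset.mem_univ _⟩
      exact ⟨T0, fun T => hT0 T (Finset.mem_univ _)⟩
    choose Tm hTm using hchoose
    set c : Fin k → ℝ := fun ℓ => f (Fin.snoc (Tm ℓ) (some ℓ)) - obar x L (Tm ℓ) with hc
    have hcle : ∀ ℓ T, c ℓ ≤ f (Fin.snoc T (some ℓ)) - obar x L T := fun ℓ T => hTm ℓ T
    have hpair : ∀ a b : Fin k, a ≠ b → 0 ≤ c a + c b := by
      intro a b hab
      have hsub := hf (Fin.snoc (Tm a) (some a)) (Fin.snoc (Tm b) (some b))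
      rw [vmeet_snoc, vjoin_snoc] at hsub
      have hmt : tmeet (some a : KTree k) (some b) = none := by
        simp [tmeet, hab]
      have hjt : tjoin (some a : KTree k) (some b) = none := by
        simp [tjoin, hab]
      rw [hmt, hjt] at hsub
      have h1 : obar x L (vmeet (Tm a) (Tm b)) ≤ f' (vmeet (Tm a) (Tm b)) := hb _
      have h2 : obar x L (vjoin (Tm a) (Tm b)) ≤ f' (vjoin (Tm a) (Tm b)) := hb _
      have h3 := obar_supermod x hx L (Tm a) (Tm b)
      simp only [f'] at h1 h2
      simp only [c]
      linarith
    have hk0 : (0 : ℕ) < k := by omega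
    obtain ⟨L', _, hL'⟩ := Finset.exists_max_image Finset.univ c ⟨⟨0, hk0⟩, Finset.mem_univ _⟩
    obtain ⟨a0, _, ha0⟩ := Finset.exists_min_image Finset.univ c ⟨⟨0, hk0⟩, Finset.mem_univ _⟩
    set x' : ℝ := max 0 (-c a0) with hx'def
    have hx'0 : 0 ≤ x' := le_max_left _ _
    have hlow : ∀ ℓ, -x' ≤ c ℓ := by
      intro ℓ
      have : -x' ≤ c a0 := by
        rw [hx'def]
        have := le_max_right 0 (-c a0)
        linarith
      exact this.trans (ha0 ℓ (Finset.mem_univ _))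
    have hup : x' ≤ c L' := by
      rcases le_or_gt 0 (c a0) with h | h
      · rw [hx'def, max_le_iff]
        constructor
        · exact h.trans (hL' a0 (Finset.mem_univ _))
        · linarith [(hL' a0 (Finset.mem_univ _)), h]
      · obtain ⟨b, hbne⟩ : ∃ b : Fin k, b ≠ a0 := by
          rcases Nat.lt_or_ge 0 a0.val with h' | h'
          · exact ⟨⟨0, hk0⟩, fun he => by simp [Fin.ext_iff] at he; omega⟩
          · exact ⟨⟨1, by omega⟩, fun he => by simp [Fin.ext_iff] at he; omega⟩
        have := hpair b a0 hbne
        rw [hx'def, max_le_iff]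
        refine ⟨?_, ?_⟩
        · have := hL' b (Finset.mem_univ _); linarith
        · have := hL' b (Finset.mem_univ _); linarith
    refine ⟨Fin.snoc x x', Fin.snoc L L', ?_, ?_⟩
    · intro i
      refine Fin.lastCases ?_ ?_ i
      · simpa using hx'0
      · intro j; simpa using hx j
    · intro T
      have hT : T = Fin.snoc (Fin.init T) (T (Fin.last n)) := (Fin.snoc_init_self T).symm
      rw [hT, obar_snoc]
      rcases ht : T (Fin.last n) with _ | ℓ
      · simpa using hb (Fin.init T)
      · simp only [Option.elim]
        have := hcle ℓ (Fin.init T)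
        split_ifs with hcase
        · subst hcase
          have := hup.trans (this)
          linarith
        · have h1 := hlow ℓ
          have := h1.trans this
          linarith

/-- `U(f)` is non-empty. -/
theorem stmt5 (k n : ℕ) (hk : 2 ≤ k) (hn : 1 ≤ n)
    (f : (Fin n → KTree k) → ℝ) (hf : KSubmodular f) (h0 : f (fun _ => none) = 0) :
    ∃ x L, memU f x L := key k hk n f hf h0
end

section
/- Let k ≥ 2 and n ≥ 1, let f : 𝔗^n → ℝ be k-submodular with f(𝟎) = 0, and let (x,L) ∈ U(f). If S(x,L) = supp(x) and the operation ⊔ is associative on the set {N((x,L),i) : i ∈ S(x,L)} (i.e. (A ⊔ B) ⊔ C = A ⊔ (B ⊔ C) for all A, B, C in this set), then min_{T ∈ 𝔗^n} f(T) ≤ −‖x‖. -/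
/-- The partial order on `𝔗`: the root `o` is below everything, leaves are incomparable. -/
def tle {k : ℕ} (a b : KTree k) : Prop := a = none ∨ a = b

/-- The componentwise partial order on `𝔗^n`. -/
def vle {k n : ℕ} (T U : Fin n → KTree k) : Prop := ∀ i, tle (T i) (U i)

/-- `T` is `(x,L)`-tight. -/
def Tight {k n : ℕ} (f : (Fin n → KTree k) → ℝ) (x : Fin n → ℝ) (L : Fin n → Fin k)
    (T : Fin n → KTree k) : Prop :=
  obar x L T = f T

/-- `N` is the intersection `⊓` of all `(x,L)`-tight elements `T` with `T i = some ℓbar`,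
characterized as the greatest lower bound of this (finite, non-empty) set. -/
def IsMeetOfTight {k n : ℕ} (f : (Fin n → KTree k) → ℝ) (x : Fin n → ℝ) (L : Fin n → Fin k)
    (i : Fin n) (ℓbar : Fin k) (N : Fin n → KTree k) : Prop :=
  (∀ T, Tight f x L T → T i = some ℓbar → vle N T) ∧
  (∀ W, (∀ T, Tight f x L T → T i = some ℓbar → vle W T) → vle W N)

section AuxLemmas
variable {k n : ℕ}

lemma tle_refl (a : KTree k) : tle a a := Or.inr rfl

lemma tle_antisymm {a b : KTree k} (h1 : tle a b) (h2 : tle b a) : a = b := by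
  rcases h1 with h | h
  · rcases h2 with h' | h'
    · rw [h, h']
    · exact h'.symm
  · exact h

lemma tle_trans {a b c : KTree k} (h1 : tle a b) (h2 : tle b c) : tle a c := by
  rcases h1 with h | rfl
  · exact Or.inl h
  · exact h2

lemma tle_tmeet_left (a b : KTree k) : tle (tmeet a b) a := by
  unfold tmeet; split
  · exact Or.inr rfl
  · exact Or.inl rfl

lemma tle_tmeet_right (a b : KTree k) : tle (tmeet a b) b := by
  unfold tmeet; split
  · next h => exact Or.inr h
  · exact Or.inl rfl

lemma tle_tmeet_of {w a b : KTree k} (h1 : tle w a) (h2 : tle w b) : tle w (tmeet a b) := by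
  rcases h1 with h | rfl
  · exact Or.inl h
  · rcases h2 with h | rfl
    · exact Or.inl h
    · exact Or.inr (by simp [tmeet])

lemma g_super (xi : ℝ) (hxi : 0 ≤ xi) (Li : Fin k) (a b : KTree k) :
    (Option.elim a 0 fun ℓ => if ℓ = Li then xi else -xi) +
      (Option.elim b 0 fun ℓ => if ℓ = Li then xi else -xi) ≤
    (Option.elim (tmeet a b) 0 fun ℓ => if ℓ = Li then xi else -xi) +
      (Option.elim (tjoin a b) 0 fun ℓ => if ℓ = Li then xi else -xi) := by
  cases a with
  | none =>
    cases b with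
    | none => simp [tmeet, tjoin]
    | some q => simp [tmeet, tjoin]
  | some p =>
    cases b with
    | none => simp [tmeet, tjoin]
    | some q =>
      by_cases hpq : p = q
      · subst hpq; simp [tmeet, tjoin]
      · have h1 : (some p : KTree k) ≠ some q := by simp [hpq]
        simp only [tmeet, tjoin, if_neg hpq, if_neg h1, Option.elim]
        by_cases hp : p = Li <;> by_cases hq : q = Li
        · exact absurd (hp.trans hq.symm) hpq
        · simp [hp, hq]
        · simp [hp, hq]
        · simp [hp, hq]; linarith

lemma obar_super (x : Fin n → ℝ) (hx : ∀ i, 0 ≤ x i) (L : Fin n → Fin k)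
    (T U : Fin n → KTree k) :
    obar x L T + obar x L U ≤ obar x L (vmeet T U) + obar x L (vjoin T U) := by
  unfold obar vmeet vjoin
  rw [← Finset.sum_add_distrib, ← Finset.sum_add_distrib]
  exact Finset.sum_le_sum fun i _ => g_super (x i) (hx i) (L i) (T i) (U i)

lemma tight_meet_join {f : (Fin n → KTree k) → ℝ} {x : Fin n → ℝ} {L : Fin n → Fin k}
    (hf : KSubmodular f) (hU : memU f x L)
    {T U : Fin n → KTree k} (hT : Tight f x L T) (hU' : Tight f x L U) :
    Tight f x L (vmeet T U) ∧ Tight f x L (vjoin T U) := by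
  have h1 := hf T U
  have h2 := hU.2 (vmeet T U)
  have h3 := hU.2 (vjoin T U)
  have h4 := obar_super x hU.1 L T U
  unfold Tight at *
  constructor <;> linarith

lemma glb_exists {f : (Fin n → KTree k) → ℝ} {x : Fin n → ℝ} {L : Fin n → Fin k}
    (hf : KSubmodular f) (hU : memU f x L) :
    ∀ s : Finset (Fin n → KTree k), (∀ T ∈ s, Tight f x L T) → s.Nonempty →
      ∃ M, Tight f x L M ∧ (∀ T ∈ s, vle M T) ∧ ∀ W, (∀ T ∈ s, vle W T) → vle W M := by
  intro s
  induction s using Finset.cons_induction with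
  | empty => intro _ h; exact absurd h (by simp)
  | cons a s ha ih =>
    intro hall _
    by_cases hs : s.Nonempty
    · obtain ⟨M, hMt, hMlb, hMglb⟩ := ih (fun T hT => hall T (Finset.mem_cons_of_mem hT)) hs
      refine ⟨vmeet a M, (tight_meet_join hf hU (hall a (Finset.mem_cons_self a s)) hMt).1,
        ?_, ?_⟩
      · intro T hT
        rcases Finset.mem_cons.mp hT with rfl | hT
        · exact fun i => tle_tmeet_left _ _
        · exact fun i => tle_trans (tle_tmeet_right _ _) (hMlb T hT i)
      · intro W hW i
        exact tle_tmeet_of (hW a (Finset.mem_cons_self a s) i)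
          (hMglb W (fun T hT => hW T (Finset.mem_cons_of_mem hT)) i)
    · rw [Finset.not_nonempty_iff_eq_empty] at hs
      subst hs
      refine ⟨a, hall a (Finset.mem_cons_self a ∅), ?_, ?_⟩
      · intro T hT
        rcases Finset.mem_cons.mp hT with rfl | hT
        · exact fun i => tle_refl _
        · exact absurd hT (by simp)
      · intro W hW
        exact hW a (Finset.mem_cons_self a ∅)

lemma join_fold {f : (Fin n → KTree k) → ℝ} {x : Fin n → ℝ} {L : Fin n → Fin k}
    (hf : KSubmodular f) (hU : memU f x L) (Lb : Fin n → Fin k)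
    (P : Fin n → Fin n → KTree k)
    (htight : ∀ i, 0 < x i → Tight f x L (P i))
    (hdiag : ∀ i, 0 < x i → P i i = some (Lb i))
    (hoff : ∀ i j, 0 < x i → 0 < x j → P j i = none ∨ P j i = some (Lb i)) :
    ∀ s : Finset (Fin n), (∀ i ∈ s, 0 < x i) → s.Nonempty →
      ∃ T, Tight f x L T ∧ (∀ i ∈ s, T i = some (Lb i)) ∧
        ∀ j, 0 < x j → T j = none ∨ T j = some (Lb j) := by
  intro s
  induction s using Finset.cons_induction with
  | empty => intro _ h; exact absurd h (by simp)
  | cons a s ha ih =>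
    intro hall _
    have hxa : 0 < x a := hall a (Finset.mem_cons_self a s)
    by_cases hs : s.Nonempty
    · obtain ⟨T, hTt, hTs, hTall⟩ := ih (fun i hi => hall i (Finset.mem_cons_of_mem hi)) hs
      refine ⟨vjoin (P a) T, (tight_meet_join hf hU (htight a hxa) hTt).2, ?_, ?_⟩
      · intro i hi
        rcases Finset.mem_cons.mp hi with rfl | hi
        · show tjoin (P i i) (T i) = some (Lb i)
          rcases hTall i hxa with h | h <;> rw [hdiag i hxa, h] <;> simp [tjoin]
        · have hxi := hall i (Finset.mem_cons_of_mem hi)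
          show tjoin (P a i) (T i) = some (Lb i)
          rcases hoff i a hxi hxa with h | h <;> rw [h, hTs i hi] <;> simp [tjoin]
      · intro j hj
        show tjoin (P a j) (T j) = none ∨ tjoin (P a j) (T j) = some (Lb j)
        rcases hoff j a hj hxa with h | h <;> rcases hTall j hj with h' | h' <;>
          rw [h, h'] <;> simp [tjoin]
    · rw [Finset.not_nonempty_iff_eq_empty] at hs
      subst hs
      refine ⟨P a, htight a hxa, ?_, fun j hj => hoff j a hj hxa⟩
      intro i hi
      rcases Finset.mem_cons.mp hi with rfl | hi
      · exact hdiag i hxa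
      · exact absurd hi (by simp)

end AuxLemmas
/-- if `S(x,L) = supp(x)` (here witnessed, for each `i ∈ supp(x)`, by the
"negative" leaf `Lb i ≠ L_i` attained by some tight element, together with the meet
`N i = N((x,L),i)` of all tight elements taking that leaf at `i`) and `⊔` is associative
on the set `{N((x,L),i) : i ∈ S(x,L)}`, then `min_{T ∈ 𝔗^n} f(T) ≤ -‖x‖`. -/
theorem stmt10 (k n : ℕ) (hk : 2 ≤ k) (hn : 1 ≤ n)
    (f : (Fin n → KTree k) → ℝ) (hf : KSubmodular f) (h0 : f (fun _ => none) = 0)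
    (x : Fin n → ℝ) (L : Fin n → Fin k) (hU : memU f x L)
    (Lb : Fin n → Fin k) (N : Fin n → Fin n → KTree k)
    (hS : ∀ i, 0 < x i → Lb i ≠ L i ∧ ∃ W, Tight f x L W ∧ W i = some (Lb i))
    (hN : ∀ i, 0 < x i → IsMeetOfTight f x L i (Lb i) (N i))
    (hassoc : ∀ i j m, 0 < x i → 0 < x j → 0 < x m →
      vjoin (vjoin (N i) (N j)) (N m) = vjoin (N i) (vjoin (N j) (N m))) :
    ∃ T, f T ≤ -nrm x := by
  classical
  by_cases hex : ∃ i, 0 < x i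
  · -- each N i is tight with value some (Lb i) at i
    have hNi : ∀ i, 0 < x i → Tight f x L (N i) ∧ N i i = some (Lb i) := by
      intro i hi
      obtain ⟨hlb, hglb⟩ := hN i hi
      obtain ⟨hne, W, hWt, hWi⟩ := hS i hi
      set s : Finset (Fin n → KTree k) :=
        Finset.univ.filter (fun T => Tight f x L T ∧ T i = some (Lb i)) with hsdef
      have hmem : ∀ T, T ∈ s ↔ (Tight f x L T ∧ T i = some (Lb i)) := by
        intro T; simp [hsdef]
      obtain ⟨M, hMt, hMlb, hMglb⟩ := glb_exists hf hU s
        (fun T hT => ((hmem T).mp hT).1) ⟨W, (hmem W).mpr ⟨hWt, hWi⟩⟩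
      have h1 : vle (N i) M :=
        hMglb _ (fun T hT => hlb T ((hmem T).mp hT).1 ((hmem T).mp hT).2)
      have h2 : vle M (N i) := hglb M (fun T hTt hTi => hMlb T ((hmem T).mpr ⟨hTt, hTi⟩))
      have hNM : N i = M := funext fun m => tle_antisymm (h1 m) (h2 m)
      refine ⟨by rw [hNM]; exact hMt, ?_⟩
      have hZ : vle (fun m => if m = i then some (Lb i) else none) (N i) := by
        apply hglb
        intro T hTt hTi m
        by_cases hm : m = i
        · subst hm; simp only [if_pos rfl]; rw [hTi]; exact Or.inr rfl
        · simp [hm, tle]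
      have hzi := hZ i
      simp only [if_pos rfl] at hzi
      rcases hzi with h | h
      · exact absurd h (by simp)
      · exact h.symm
    -- off-diagonal values are in {none, some (Lb i)}
    have hoff : ∀ i j, 0 < x i → 0 < x j → N j i = none ∨ N j i = some (Lb i) := by
      intro i j hi hj
      cases hji : N j i with
      | none => exact Or.inl rfl
      | some ℓ =>
        right
        by_cases hl : ℓ = Lb i
        · rw [hl]
        · exfalso
          have hA := congrFun (hassoc j i i hj hi hi) i
          simp only [vjoin] at hA
          rw [hji, (hNi i hi).2] at hA
          simp [tjoin, hl] at hA
    obtain ⟨i0, hi0⟩ := hex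
    obtain ⟨T, hTt, hTs, hTall⟩ := join_fold hf hU Lb N
      (fun i hi => (hNi i hi).1) (fun i hi => (hNi i hi).2) hoff
      (Finset.univ.filter (fun i => 0 < x i))
      (fun i hi => (Finset.mem_filter.mp hi).2) ⟨i0, by simp [hi0]⟩
    refine ⟨T, ?_⟩
    have hobar : obar x L T = -nrm x := by
      unfold obar nrm
      rw [← Finset.sum_neg_distrib]
      apply Finset.sum_congr rfl
      intro i _
      by_cases hi : 0 < x i
      · have hTi : T i = some (Lb i) := hTs i (by simp [hi])
        rw [hTi]
        simp only [Option.elim]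
        rw [if_neg (hS i hi).1]
      · have hx0 : x i = 0 := le_antisymm (not_lt.mp hi) (hU.1 i)
        cases T i <;> simp [hx0]
    rw [Tight] at hTt
    linarith
  · push_neg at hex
    have hx0 : ∀ i, x i = 0 := fun i => le_antisymm (hex i) (hU.1 i)
    refine ⟨fun _ => none, ?_⟩
    rw [h0]
    simp [nrm, hx0]
end

section
/- Let k ≥ 2 and n ≥ 1, and let f : 𝔗^n → ℤ be k-submodular with f(𝟎) = 0. Then the set IU(f) = U(f) ∩ (ℤ_{≥0}^n × 𝔏^n) is non-empty. -/
/-- `f : 𝔗^n → ℤ` is `k`-submodular. -/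
def KSubmodularZ {k n : ℕ} (f : (Fin n → KTree k) → ℤ) : Prop :=
  ∀ T U, f (vmeet T U) + f (vjoin T U) ≤ f T + f U

/-- Membership `(x,L) ∈ IU(f) = U(f) ⊓ (ℤ_{≥0}^n × 𝔏^n)` for integer-valued `f`. -/
def memIU {k n : ℕ} (f : (Fin n → KTree k) → ℤ) (x : Fin n → ℝ) (L : Fin n → Fin k) : Prop :=
  (∀ i, 0 ≤ x i) ∧ (∀ i, ∃ m : ℤ, x i = (m : ℝ)) ∧ ∀ T, obar x L T ≤ (f T : ℝ)

/- ### Auxiliary lemmas -/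

lemma tmeet_self' {k : ℕ} (a : KTree k) : tmeet a a = a := by simp [tmeet]

lemma tmeet_none' {k : ℕ} (a : KTree k) : tmeet a none = none := by
  cases a <;> simp [tmeet]

lemma tmeet_none_left' {k : ℕ} (a : KTree k) : tmeet none a = none := by
  cases a <;> simp [tmeet]

lemma tjoin_none' {k : ℕ} (a : KTree k) : tjoin a none = a := by cases a <;> rfl

lemma tjoin_self' {k : ℕ} (a : KTree k) : tjoin a a = a := by cases a <;> simp [tjoin]

lemma tmeet_some_ne' {k : ℕ} {a b : Fin k} (h : a ≠ b) :
    tmeet (some a : KTree k) (some b) = none := by simp [tmeet, h]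

lemma tjoin_some_ne' {k : ℕ} {a b : Fin k} (h : a ≠ b) :
    tjoin (some a : KTree k) (some b) = none := by simp [tjoin, h]

noncomputable def bestLeaf {k : ℕ} (hk : 0 < k) (φ : Fin k → ℤ) : Fin k :=
  haveI : Nonempty (Fin k) := ⟨⟨0, hk⟩⟩
  Classical.choose (Finite.exists_max φ)

lemma bestLeaf_spec {k : ℕ} (hk : 0 < k) (φ : Fin k → ℤ) (ℓ : Fin k) :
    φ ℓ ≤ φ (bestLeaf hk φ) :=
  haveI : Nonempty (Fin k) := ⟨⟨0, hk⟩⟩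
  Classical.choose_spec (Finite.exists_max φ) ℓ

noncomputable def Svec {k n : ℕ} (hk : 0 < k) (f : (Fin n → KTree k) → ℤ) :
    ℕ → Fin n → KTree k
  | 0 => fun _ => none
  | m + 1 =>
    if h : m < n then
      Function.update (Svec hk f m) ⟨m, h⟩
        (some (bestLeaf hk (fun ℓ => f (Function.update (Svec hk f m) ⟨m, h⟩ (some ℓ)))))
    else Svec hk f m

noncomputable def Lvec {k n : ℕ} (hk : 0 < k) (f : (Fin n → KTree k) → ℤ) (i : Fin n) :
    Fin k :=
  bestLeaf hk (fun ℓ => f (Function.update (Svec hk f i.val) i (some ℓ)))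

lemma Svec_succ {k n : ℕ} (hk : 0 < k) (f : (Fin n → KTree k) → ℤ) (i : Fin n) :
    Svec hk f (i.val + 1) = Function.update (Svec hk f i.val) i (some (Lvec hk f i)) := by
  simp [Svec, Lvec, i.isLt]

lemma Svec_none {k n : ℕ} (hk : 0 < k) (f : (Fin n → KTree k) → ℤ) :
    ∀ m, ∀ i : Fin n, m ≤ i.val → Svec hk f m i = none := by
  intro m
  induction m with
  | zero => intro i _; rfl
  | succ m ih =>
    intro i h
    rw [Svec]
    split
    · rw [Function.update_of_ne (by
        intro he
        rw [he] at h
        simp at h)]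
      exact ih i (by omega)
    · exact ih i (by omega)

lemma Svec_lt {k n : ℕ} (hk : 0 < k) (f : (Fin n → KTree k) → ℤ) :
    ∀ m, ∀ i : Fin n, i.val < m → Svec hk f m i = some (Lvec hk f i) := by
  intro m
  induction m with
  | zero => intro i h; omega
  | succ m ih =>
    intro i h
    rcases Nat.lt_or_ge i.val m with h' | h'
    · rw [Svec]
      split
      · rw [Function.update_of_ne (by
          intro he
          rw [he] at h'
          simp at h')]
        exact ih i h'
      · exact ih i h'
    · have hm : m = i.val := by omega
      subst hm
      rw [Svec_succ hk f i, Function.update_self]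

/-- for integer-valued `k`-submodular `f` with `f(𝟎) = 0`,
the set `IU(f)` is non-empty. -/
theorem stmt11 (k n : ℕ) (hk : 2 ≤ k) (hn : 1 ≤ n)
    (f : (Fin n → KTree k) → ℤ) (hf : KSubmodularZ f) (h0 : f (fun _ => none) = 0) :
    ∃ x L, memIU f x L := by
  have hk0 : 0 < k := by omega
  set x' : Fin n → ℤ := fun i => f (Svec hk0 f (i.val + 1)) - f (Svec hk0 f i.val) with hx'
  -- nonnegativity of the increments
  have hxpos : ∀ i : Fin n, 0 ≤ x' i := by
    intro i
    have ha : (⟨0, by omega⟩ : Fin k) ≠ ⟨1, by omega⟩ := by simp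
    set Ta := Function.update (Svec hk0 f i.val) i (some (⟨0, by omega⟩ : Fin k)) with hTa
    set Tb := Function.update (Svec hk0 f i.val) i (some (⟨1, by omega⟩ : Fin k)) with hTb
    have hmeet : vmeet Ta Tb = Svec hk0 f i.val := by
      funext j
      show tmeet (Ta j) (Tb j) = Svec hk0 f i.val j
      by_cases hji : j = i
      · subst hji
        rw [hTa, hTb, Function.update_self, Function.update_self, tmeet_some_ne' ha,
          Svec_none hk0 f j.val j le_rfl]
      · rw [hTa, hTb, Function.update_of_ne hji, Function.update_of_ne hji, tmeet_self']
    have hjoin : vjoin Ta Tb = Svec hk0 f i.val := by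
      funext j
      show tjoin (Ta j) (Tb j) = Svec hk0 f i.val j
      by_cases hji : j = i
      · subst hji
        rw [hTa, hTb, Function.update_self, Function.update_self, tjoin_some_ne' ha,
          Svec_none hk0 f j.val j le_rfl]
      · rw [hTa, hTb, Function.update_of_ne hji, Function.update_of_ne hji, tjoin_self']
    have h1 := hf Ta Tb
    rw [hmeet, hjoin] at h1
    have h2 : f Ta ≤ f (Svec hk0 f (i.val + 1)) := by
      rw [Svec_succ hk0 f i]
      exact bestLeaf_spec hk0 (fun ℓ => f (Function.update (Svec hk0 f i.val) i (some ℓ))) _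
    have h3 : f Tb ≤ f (Svec hk0 f (i.val + 1)) := by
      rw [Svec_succ hk0 f i]
      exact bestLeaf_spec hk0 (fun ℓ => f (Function.update (Svec hk0 f i.val) i (some ℓ))) _
    have hxj : x' i = f (Svec hk0 f (i.val + 1)) - f (Svec hk0 f i.val) := rfl
    omega
  -- main inequality
  have main : ∀ T : Fin n → KTree k,
      (∑ i, Option.elim (T i) 0 (fun ℓ => if ℓ = Lvec hk0 f i then x' i else -x' i)) ≤ f T := by
    intro T
    set W : ℕ → Fin n → KTree k :=
      fun m i => if i.val < m then some (Lvec hk0 f i) else T i with hW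
    have hWlt : ∀ m, ∀ i : Fin n, i.val < m → W m i = some (Lvec hk0 f i) := by
      intro m i h; simp [hW, h]
    have hWge : ∀ m, ∀ i : Fin n, m ≤ i.val → W m i = T i := by
      intro m i h; simp [hW, Nat.not_lt.mpr h]
    have hW0 : W 0 = T := by funext i; exact hWge 0 i (Nat.zero_le _)
    have hWn : W n = Svec hk0 f n := by
      funext i
      rw [hWlt n i i.isLt, Svec_lt hk0 f n i i.isLt]
    have hWsucc : ∀ j : Fin n,
        W (j.val + 1) = Function.update (W j.val) j (some (Lvec hk0 f j)) := by
      intro j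
      funext i
      by_cases hij : i = j
      · subst hij
        rw [Function.update_self, hWlt _ i (by omega)]
      · rw [Function.update_of_ne hij]
        have hv : i.val ≠ j.val := fun h => hij (Fin.eq_of_val_eq h)
        rcases Nat.lt_or_ge i.val j.val with h | h
        · rw [hWlt _ i (by omega), hWlt _ i h]
        · rw [hWge _ i (by omega), hWge _ i h]
    have hstep : ∀ j : Fin n,
        f (W (j.val + 1)) + Option.elim (T j) 0
          (fun ℓ => if ℓ = Lvec hk0 f j then x' j else -x' j)
          ≤ f (W j.val) + x' j := by
      intro j
      have hWjj : W j.val j = T j := hWge j.val j le_rfl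
      have key : ∀ v : KTree k, tmeet v (some (Lvec hk0 f j)) = none →
          vmeet (Function.update (W j.val) j v) (Svec hk0 f (j.val + 1)) = Svec hk0 f j.val ∧
          vjoin (Function.update (W j.val) j v) (Svec hk0 f (j.val + 1)) =
            Function.update (W j.val) j (tjoin v (some (Lvec hk0 f j))) := by
        intro v hv
        constructor
        · funext i
          show tmeet (Function.update (W j.val) j v i) (Svec hk0 f (j.val + 1) i)
            = Svec hk0 f j.val i
          rcases lt_trichotomy i.val j.val with h | h | h
          · have hij : i ≠ j := fun he => by rw [he] at h; omega
            rw [Function.update_of_ne hij, hWlt _ i h, Svec_lt hk0 f _ i (by omega),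
              Svec_lt hk0 f _ i h, tmeet_self']
          · have hij : i = j := Fin.eq_of_val_eq h
            subst hij
            rw [Function.update_self, Svec_lt hk0 f _ i (by omega), hv,
              Svec_none hk0 f _ i le_rfl]
          · have hij : i ≠ j := fun he => by rw [he] at h; omega
            rw [Function.update_of_ne hij, hWge _ i (by omega),
              Svec_none hk0 f _ i (by omega), Svec_none hk0 f _ i (by omega), tmeet_none']
        · funext i
          show tjoin (Function.update (W j.val) j v i) (Svec hk0 f (j.val + 1) i)
            = Function.update (W j.val) j (tjoin v (some (Lvec hk0 f j))) i
          rcases lt_trichotomy i.val j.val with h | h | h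
          · have hij : i ≠ j := fun he => by rw [he] at h; omega
            rw [Function.update_of_ne hij, Function.update_of_ne hij, hWlt _ i h,
              Svec_lt hk0 f _ i (by omega), tjoin_self']
          · have hij : i = j := Fin.eq_of_val_eq h
            subst hij
            rw [Function.update_self, Function.update_self, Svec_lt hk0 f _ i (by omega)]
          · have hij : i ≠ j := fun he => by rw [he] at h; omega
            rw [Function.update_of_ne hij, Function.update_of_ne hij,
              hWge _ i (by omega), Svec_none hk0 f _ i (by omega), tjoin_none']
      have hxj : x' j = f (Svec hk0 f (j.val + 1)) - f (Svec hk0 f j.val) := rfl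
      rcases hTj : T j with _ | ℓ
      · -- T j = root
        have heq : Function.update (W j.val) j (none : KTree k) = W j.val := by
          rw [← hTj, ← hWjj, Function.update_eq_self]
        obtain ⟨hm, hj⟩ := key none (tmeet_none_left' _)
        rw [heq] at hm hj
        have hj' : vjoin (W j.val) (Svec hk0 f (j.val + 1)) = W (j.val + 1) := by
          rw [hj]; exact (hWsucc j).symm
        have hsub := hf (W j.val) (Svec hk0 f (j.val + 1))
        rw [hm, hj'] at hsub
        simp only [Option.elim]
        omega
      · by_cases hℓ : ℓ = Lvec hk0 f j
        · subst hℓ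
          have hW1 : W (j.val + 1) = W j.val := by
            rw [hWsucc j, ← hTj, ← hWjj, Function.update_eq_self]
          rw [hW1]
          simp [Option.elim]
        · have heq : Function.update (W j.val) j (some ℓ) = W j.val := by
            rw [← hTj, ← hWjj, Function.update_eq_self]
          obtain ⟨hm1, hj1⟩ := key (some ℓ) (tmeet_some_ne' hℓ)
          rw [heq] at hm1 hj1
          rw [tjoin_some_ne' hℓ] at hj1
          have hsub1 := hf (W j.val) (Svec hk0 f (j.val + 1))
          rw [hm1, hj1] at hsub1
          obtain ⟨hm2, hj2⟩ := key none (tmeet_none_left' _)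
          have hj2' : vjoin (Function.update (W j.val) j none) (Svec hk0 f (j.val + 1))
              = W (j.val + 1) := by
            rw [hj2]; exact (hWsucc j).symm
          have hsub2 := hf (Function.update (W j.val) j none) (Svec hk0 f (j.val + 1))
          rw [hm2, hj2'] at hsub2
          simp only [Option.elim, if_neg hℓ]
          omega
    -- telescoping
    have tele1 : ∑ j : Fin n, (f (W (j.val + 1)) - f (W j.val)) = f (W n) - f (W 0) := by
      rw [Fin.sum_univ_eq_sum_range (fun m => f (W (m + 1)) - f (W m)) n,
        Finset.sum_range_sub (fun m => f (W m)) n]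
    have tele2 : ∑ j : Fin n, x' j = f (Svec hk0 f n) - f (Svec hk0 f 0) := by
      rw [hx']
      rw [Fin.sum_univ_eq_sum_range (fun m => f (Svec hk0 f (m + 1)) - f (Svec hk0 f m)) n,
        Finset.sum_range_sub (fun m => f (Svec hk0 f m)) n]
    have hS0 : f (Svec hk0 f 0) = 0 := h0
    have hsum := Finset.sum_le_sum (fun j _ => hstep j) (s := Finset.univ)
    rw [Finset.sum_add_distrib, Finset.sum_add_distrib] at hsum
    have hdiff : ∑ j : Fin n, f (W (j.val + 1)) - ∑ j : Fin n, f (W j.val)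
        = f (W n) - f (W 0) := by
      rw [← tele1, Finset.sum_sub_distrib]
    rw [hW0] at hdiff
    rw [hWn] at hdiff
    have := tele2
    omega
  -- assemble
  refine ⟨fun i => ((x' i : ℤ) : ℝ), Lvec hk0 f, ?_, ?_, ?_⟩
  · intro i
    show (0:ℝ) ≤ ((x' i : ℤ) : ℝ)
    exact_mod_cast hxpos i
  · intro i
    exact ⟨x' i, rfl⟩
  · intro T
    have h1 := main T
    have h2 : obar (fun i => ((x' i : ℤ) : ℝ)) (Lvec hk0 f) T
        = ((∑ i, Option.elim (T i) 0
            (fun ℓ => if ℓ = Lvec hk0 f i then x' i else -x' i) : ℤ) : ℝ) := by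
      rw [obar]
      push_cast
      refine Finset.sum_congr rfl (fun i _ => ?_)
      rcases T i with _ | ℓ
      · simp
      · simp only [Option.elim]
        split <;> push_cast <;> ring
    rw [h2]
    exact_mod_cast h1
end
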